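/- arXiv:2106.11863 — 4 statements merged into one kernel-verified Lean document; each statement's English description precedes it below -/
import Mathlib

section
/- With notation as above, the matrix L_c = D_c - F D_f^{-1} F^T is a graph Laplacian: its off-diagonal entries are nonpositive, its diagonal entries are nonnegative, and L_c · 1 = 0. -/
open Matrix BigOperators

/-- `L_c = D_c - F D_f⁻¹ Fᵀ` is a graph Laplacian: nonpositive off-diagonal
entries, nonnegative diagonal entries, and `L_c · 1 = 0`.  Here `D_f = diag(Fᵀ·1)` is
invertible and `D_c · 1 = F · 1` (vanishing row sums of the original Laplacian). -/
theorem independent_set_coarsening_is_laplacian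
    (p q : ℕ) (F : Matrix (Fin p) (Fin q) ℝ)
    (hFnonneg : ∀ i j, 0 ≤ F i j)
    (d : Fin q → ℝ) (hd : ∀ j, d j = ∑ i, F i j)
    (hdne : ∀ j, d j ≠ 0)
    (c : Fin p → ℝ)
    -- row sums of the Laplacian vanish: D_c · 1 = F · 1
    (hc : c = F.mulVec (fun _ => 1))
    (Dc : Matrix (Fin p) (Fin p) ℝ) (hDc : Dc = Matrix.diagonal c)
    (Lc : Matrix (Fin p) (Fin p) ℝ)
    (hLc : Lc = Dc - F * Matrix.diagonal (fun j => (d j)⁻¹) * Fᵀ) :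
    (∀ i j, i ≠ j → Lc i j ≤ 0) ∧ (∀ i, 0 ≤ Lc i i) ∧
    Lc.mulVec (fun _ => 1) = 0 := by
  have hdpos : ∀ j, 0 < d j := fun j =>
    lt_of_le_of_ne (by rw [hd j]; exact Finset.sum_nonneg fun i _ => hFnonneg i j)
      (hdne j).symm
  have hci : ∀ i, c i = ∑ k, F i k := by
    intro i
    simp [hc, Matrix.mulVec, dotProduct]
  have hEntry : ∀ i j, Lc i j = Dc i j - ∑ k, F i k * (d k)⁻¹ * F j k := by
    intro i j
    simp [hLc, Matrix.sub_apply, Matrix.mul_apply, Matrix.mul_diagonal,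
      Matrix.transpose_apply, Matrix.diagonal_apply, mul_ite, mul_zero,
      Finset.sum_ite_eq, ite_mul, zero_mul]
  have hsum_nonneg : ∀ i j, 0 ≤ ∑ k, F i k * (d k)⁻¹ * F j k := by
    intro i j
    exact Finset.sum_nonneg fun k _ =>
      mul_nonneg (mul_nonneg (hFnonneg i k) (inv_nonneg.mpr (hdpos k).le)) (hFnonneg j k)
  refine ⟨?_, ?_, ?_⟩
  · intro i j hij
    rw [hEntry, hDc, Matrix.diagonal_apply_ne _ hij]
    linarith [hsum_nonneg i j]
  · intro i
    rw [hEntry, hDc, Matrix.diagonal_apply_eq, hci i, sub_nonneg]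
    apply Finset.sum_le_sum
    intro k _
    have hFle : F i k ≤ d k := by
      rw [hd k]
      exact Finset.single_le_sum (fun m _ => hFnonneg m k) (Finset.mem_univ i)
    have h1 : (d k)⁻¹ * F i k ≤ 1 := by
      rw [← div_eq_inv_mul]
      exact div_le_one_of_le₀ hFle (hdpos k).le
    calc F i k * (d k)⁻¹ * F i k = F i k * ((d k)⁻¹ * F i k) := by ring
      _ ≤ F i k * 1 := mul_le_mul_of_nonneg_left h1 (hFnonneg i k)
      _ = F i k := mul_one _
  · funext i
    have : ∀ j, Lc i j = Dc i j - ∑ k, F i k * (d k)⁻¹ * F j k := hEntry i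
    simp only [Matrix.mulVec, dotProduct, mul_one, Pi.zero_apply]
    rw [Finset.sum_congr rfl fun j _ => hEntry i j, Finset.sum_sub_distrib]
    rw [Finset.sum_comm]
    have hDcsum : ∑ j, Dc i j = c i := by
      simp [hDc, Matrix.diagonal_apply]
    rw [hDcsum]
    have : ∀ k : Fin q, ∑ j, F i k * (d k)⁻¹ * F j k = F i k := by
      intro k
      rw [← Finset.mul_sum, ← hd k, mul_assoc, inv_mul_cancel₀ (hdne k), mul_one]
    rw [Finset.sum_congr rfl fun k _ => this k, hci i, sub_self]
end

section
/- The Schur complement of a graph Laplacian is again a graph Laplacian: if L = [[L11, L12],[L12^T, L22]] is the Laplacian of a connected weighted graph partitioned by a nonempty proper subset V1 of nodes, then L22 is invertible and the Kron reduction L(V1) = L11 - L12 L22^{-1} L12^T satisfies: L(V1) is symmetric positive semidefinite, has nonpositive off-diagonal entries, and L(V1)·1 = 0. -/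
open Matrix BigOperators

/-- Quadratic form of a weighted Laplacian. -/
theorem lap_quad_aux {n : Type*} [Fintype n] [DecidableEq n] (A : Matrix n n ℝ)
    (hsym : A.IsSymm) (x : n → ℝ) :
    x ⬝ᵥ (Matrix.diagonal (fun i => ∑ j, A i j) - A).mulVec x
      = (1/2) * ∑ i, ∑ j, A i j * (x i - x j)^2 := by
  have hswap : ∑ i, ∑ j, A i j * (x j)^2 = ∑ i, ∑ j, A i j * (x i)^2 := by
    rw [Finset.sum_comm]
    exact Finset.sum_congr rfl fun i _ => Finset.sum_congr rfl fun j _ => by rw [hsym.apply]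
  have h1 : x ⬝ᵥ (Matrix.diagonal (fun i => ∑ j, A i j)).mulVec x = ∑ i, ∑ j, A i j * x i ^ 2 := by
    simp only [dotProduct, mulVec_diagonal]
    exact Finset.sum_congr rfl fun i _ => by
      rw [Finset.sum_mul, Finset.mul_sum]
      exact Finset.sum_congr rfl fun j _ => by ring
  have h2 : x ⬝ᵥ A.mulVec x = ∑ i, ∑ j, A i j * (x i * x j) := by
    simp only [dotProduct, mulVec, Finset.mul_sum]
    exact Finset.sum_congr rfl fun i _ => Finset.sum_congr rfl fun j _ => by ring
  have expand : ∑ i, ∑ j, A i j * (x i - x j)^2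
      = (∑ i, ∑ j, A i j * x i^2) + (∑ i, ∑ j, A i j * x j^2)
        - 2 * ∑ i, ∑ j, A i j * (x i * x j) := by
    have h3 : ∀ i, ∑ j, A i j * (x i - x j)^2
        = ((∑ j, A i j * x i^2) + (∑ j, A i j * x j^2)) - 2 * ∑ j, A i j * (x i * x j) := by
      intro i
      rw [Finset.mul_sum, ← Finset.sum_add_distrib, ← Finset.sum_sub_distrib]
      exact Finset.sum_congr rfl fun j _ => by ring
    rw [Finset.sum_congr rfl fun i _ => h3 i]
    simp only [Finset.sum_sub_distrib, Finset.sum_add_distrib, Finset.mul_sum]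
  rw [sub_mulVec, dotProduct_sub, h1, h2, expand, hswap]
  ring

/-- A function constant on edges of a connected graph is constant. -/
theorem const_of_conn_aux {V : Type*} {G : SimpleGraph V} (hG : G.Connected) (f : V → ℝ)
    (h : ∀ a b, G.Adj a b → f a = f b) (a b : V) : f a = f b := by
  have key : ∀ (a b : V), G.Walk a b → f a = f b := by
    intro a b w
    induction w with
    | nil => rfl
    | cons h' _ ih => exact (h _ _ h').trans ih
  exact (hG.preconnected a b).elim (key a b)

/-- A positive definite Z-matrix has entrywise nonnegative inverse. -/
theorem zinv_nonneg_aux {n : Type*} [Fintype n] [DecidableEq n] {M : Matrix n n ℝ}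
    (hM : M.PosDef) (hoff : ∀ i j, i ≠ j → M i j ≤ 0) (i j : n) : 0 ≤ M⁻¹ i j := by
  have hinv : M * M⁻¹ = 1 := mul_nonsing_inv M (isUnit_iff_ne_zero.mpr hM.det_pos.ne')
  set x : n → ℝ := fun k => M⁻¹ k j with hx
  have hMx : M.mulVec x = Pi.single j 1 := by
    ext k
    have := congrFun (congrFun hinv k) j
    simpa [mulVec, dotProduct, mul_apply, one_apply, Pi.single_apply, eq_comm] using this
  set xm : n → ℝ := fun k => max (-(x k)) 0 with hxm
  set xp : n → ℝ := fun k => max (x k) 0 with hxp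
  have hxsplit : x = xp - xm := by
    ext k; simp only [hxp, hxm, Pi.sub_apply, max_def]; split_ifs <;> simp <;> linarith
  have hxm0 : ∀ k, 0 ≤ xm k := fun k => le_max_right _ _
  have hxp0 : ∀ k, 0 ≤ xp k := fun k => le_max_right _ _
  have hprod : ∀ k, xm k * xp k = 0 := by
    intro k
    rcases le_or_gt (x k) 0 with h' | h'
    · simp [hxp, max_eq_right h', mul_comm]
    · simp [hxm, max_eq_right (by linarith : -(x k) ≤ 0)]
  have hS : xm ⬝ᵥ M.mulVec x = xm j := by
    rw [hMx]; simp [dotProduct, Pi.single_apply]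
  have hmix : xm ⬝ᵥ M.mulVec xp ≤ 0 := by
    rw [dotProduct]
    apply Finset.sum_nonpos
    intro k _
    rw [mulVec, dotProduct, Finset.mul_sum]
    apply Finset.sum_nonpos
    intro l _
    rcases eq_or_ne k l with rfl | hkl
    · rw [show xm k * (M k k * xp k) = (xm k * xp k) * M k k by ring, hprod]; simp
    · have h1 := hoff k l hkl
      nlinarith [hxm0 k, hxp0 l, mul_nonneg (hxm0 k) (hxp0 l)]
  have hquad : xm ⬝ᵥ M.mulVec xm ≤ 0 := by
    have heq : xm ⬝ᵥ M.mulVec x = xm ⬝ᵥ M.mulVec xp - xm ⬝ᵥ M.mulVec xm := by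
      rw [hxsplit, mulVec_sub, dotProduct_sub]
    rw [hS] at heq
    linarith [hxm0 j]
  have hxmz : xm = 0 := by
    by_contra hne
    have := hM.dotProduct_mulVec_pos hne
    rw [star_trivial] at this
    linarith
  have hge : 0 ≤ x i := by
    have h := congrFun hxmz i
    have h2 : -(x i) ≤ max (-(x i)) 0 := le_max_left _ _
    rw [show max (-(x i)) 0 = xm i from rfl, h] at h2
    simpa using h2
  simpa [hx] using hge

/-- Kron reduction.  For the Laplacian of a connected weighted graph,
partitioned with a nonempty proper node subset `V1` (the `inl` nodes) first, the block
`L22` is invertible and the Schur complement `L(V1) = L11 - L12 L22⁻¹ L12ᵀ` is a graph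
Laplacian: symmetric positive semidefinite, nonpositive off-diagonal, `L(V1)·1 = 0`. -/
theorem kron_reduction_is_laplacian
    (p q : ℕ) [NeZero p] [NeZero q]
    (A : Matrix (Fin p ⊕ Fin q) (Fin p ⊕ Fin q) ℝ)
    (hsym : A.IsSymm) (hnonneg : ∀ i j, 0 ≤ A i j) (hdiag : ∀ i, A i i = 0)
    (hconn : (SimpleGraph.fromRel (fun i j => 0 < A i j)).Connected)
    (L : Matrix (Fin p ⊕ Fin q) (Fin p ⊕ Fin q) ℝ)
    (hL : L = Matrix.diagonal (fun i => ∑ j, A i j) - A)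
    (L11 : Matrix (Fin p) (Fin p) ℝ) (h11 : L11 = L.toBlocks₁₁)
    (L12 : Matrix (Fin p) (Fin q) ℝ) (h12 : L12 = L.toBlocks₁₂)
    (L22 : Matrix (Fin q) (Fin q) ℝ) (h22 : L22 = L.toBlocks₂₂)
    (Lr : Matrix (Fin p) (Fin p) ℝ)
    (hLr : Lr = L11 - L12 * L22⁻¹ * L12ᵀ) :
    IsUnit L22 ∧ Lr.PosSemidef ∧ (∀ i j, i ≠ j → Lr i j ≤ 0) ∧
    Lr.mulVec (fun _ => 1) = 0 := by
  -- basic entry facts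
  have hoffL : ∀ i j, i ≠ j → L i j = -A i j := by
    intro i j h; simp [hL, diagonal_apply_ne _ h]
  have hLsym : Lᵀ = L := by
    rw [hL]; simp [transpose_sub, diagonal_transpose, hsym.eq]
  have hLapp : ∀ i j, L j i = L i j := fun i j => by
    conv_lhs => rw [← hLsym]
    rfl
  -- quadratic form
  have hquad : ∀ x, x ⬝ᵥ L.mulVec x = (1/2) * ∑ i, ∑ j, A i j * (x i - x j)^2 := by
    intro x; rw [hL]; exact lap_quad_aux A hsym x
  have htermnn : ∀ (x : Fin p ⊕ Fin q → ℝ) i j, 0 ≤ A i j * (x i - x j)^2 :=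
    fun x i j => mul_nonneg (hnonneg i j) (sq_nonneg _)
  have hqnn : ∀ x, 0 ≤ x ⬝ᵥ L.mulVec x := by
    intro x
    rw [hquad]
    have : 0 ≤ ∑ i, ∑ j, A i j * (x i - x j)^2 :=
      Finset.sum_nonneg fun i _ => Finset.sum_nonneg fun j _ => htermnn x i j
    linarith
  have hconst : ∀ x, x ⬝ᵥ L.mulVec x = 0 → ∀ a b, x a = x b := by
    intro x hx0
    have hsum0 : ∑ i, ∑ j, A i j * (x i - x j)^2 = 0 := by
      have := hquad x; rw [hx0] at this; linarith
    have hterm0 : ∀ i j, A i j * (x i - x j)^2 = 0 := by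
      intro i j
      have h1 := (Finset.sum_eq_zero_iff_of_nonneg
        (fun i _ => Finset.sum_nonneg fun j _ => htermnn x i j)).mp hsum0 i (Finset.mem_univ i)
      exact (Finset.sum_eq_zero_iff_of_nonneg
        (fun j _ => htermnn x i j)).mp h1 j (Finset.mem_univ j)
    have hedge : ∀ a b, (SimpleGraph.fromRel (fun i j => 0 < A i j)).Adj a b → x a = x b := by
      intro a b hab
      rw [SimpleGraph.fromRel_adj] at hab
      have hpos : 0 < A a b := by
        rcases hab.2 with h' | h'
        · exact h'
        · rwa [← hsym.apply] at h'
      have := hterm0 a b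
      have h2 : (x a - x b)^2 = 0 := by
        rcases mul_eq_zero.mp this with h' | h'
        · exact absurd h' hpos.ne'
        · exact h'
      have := pow_eq_zero_iff (n := 2) (by norm_num) |>.mp h2
      linarith
    exact const_of_conn_aux hconn x hedge
  -- block structure
  have hblocks : L = fromBlocks L11 L12 L12ᵀ L22 := by
    rw [h11, h12, h22]
    have h21 : L.toBlocks₂₁ = L.toBlocks₁₂ᵀ := by
      ext i j
      simp only [toBlocks₂₁, toBlocks₁₂, transpose_apply, of_apply]
      exact hLapp _ _
    rw [← h21, fromBlocks_toBlocks]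
  -- L22 is positive definite
  have hL22quad : ∀ (y : Fin q → ℝ),
      y ⬝ᵥ L22.mulVec y = (Sum.elim 0 y) ⬝ᵥ L.mulVec (Sum.elim 0 y) := by
    intro y
    rw [hblocks, fromBlocks_mulVec, dotProduct_block]
    simp [Sum.elim_comp_inl, Sum.elim_comp_inr]
  have hPD : L22.PosDef := by
    refine PosDef.of_dotProduct_mulVec_pos ?_ ?_
    · ext i j
      simp only [conjTranspose_apply, star_trivial, h22, toBlocks₂₂, of_apply]
      exact hLapp _ _
    · intro y hy
      rw [star_trivial, hL22quad]
      rcases lt_or_eq_of_le (hqnn (Sum.elim 0 y)) with h' | h'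
      · exact h'
      · exfalso
        apply hy
        ext k
        have := hconst (Sum.elim 0 y) h'.symm (Sum.inr k)
          (Sum.inl ⟨0, Nat.pos_of_ne_zero (NeZero.ne p)⟩)
        simpa using this
  have hUnitDet : IsUnit L22.det := isUnit_iff_ne_zero.mpr hPD.det_pos.ne'
  have hUnit : IsUnit L22 := (isUnit_iff_isUnit_det L22).mpr hUnitDet
  refine ⟨hUnit, ?_, ?_, ?_⟩
  -- positive semidefiniteness via Schur complement
  · haveI : Invertible L22 := invertibleOfIsUnitDet L22 hUnitDet
    have hLpsd : (fromBlocks L11 L12 L12ᴴ L22).PosSemidef := by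
      have hH : L12ᴴ = L12ᵀ := by ext i j; simp [conjTranspose_apply]
      rw [hH, ← hblocks]
      refine PosSemidef.of_dotProduct_mulVec_nonneg ?_ ?_
      · ext i j
        simp only [conjTranspose_apply, star_trivial]
        exact hLapp _ _
      · intro x
        rw [star_trivial]
        exact hqnn x
    have := (PosDef.fromBlocks₂₂ L11 L12 hPD).mp hLpsd
    have hH : L12ᴴ = L12ᵀ := by ext i j; simp [conjTranspose_apply]
    rw [hH] at this
    rwa [hLr]
  -- off-diagonal entries nonpositive
  · intro i j hij
    have hL22off : ∀ a b, a ≠ b → L22 a b ≤ 0 := by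
      intro a b hab
      have : (Sum.inr a : Fin p ⊕ Fin q) ≠ Sum.inr b := fun h => hab (Sum.inr_injective h)
      rw [h22]
      show L (Sum.inr a) (Sum.inr b) ≤ 0
      rw [hoffL _ _ this]
      simpa using hnonneg _ _
    have hL12np : ∀ a b, L12 a b ≤ 0 := by
      intro a b
      rw [h12]
      show L (Sum.inl a) (Sum.inr b) ≤ 0
      rw [hoffL _ _ (by simp)]
      simpa using hnonneg _ _
    have hinvnn : ∀ a b, 0 ≤ L22⁻¹ a b := zinv_nonneg_aux hPD hL22off
    have hterm : 0 ≤ (L12 * L22⁻¹ * L12ᵀ) i j := by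
      rw [mul_apply]
      apply Finset.sum_nonneg
      intro l _
      rw [mul_apply, Finset.sum_mul]
      apply Finset.sum_nonneg
      intro k _
      have h1 := hL12np i k
      have h2 := hinvnn k l
      have h3 := hL12np j l
      simp only [transpose_apply]
      have h4 : 0 ≤ (-(L12 i k)) * L22⁻¹ k l * (-(L12 j l)) :=
        mul_nonneg (mul_nonneg (neg_nonneg.mpr h1) h2) (neg_nonneg.mpr h3)
      nlinarith
    have hL11off : L11 i j ≤ 0 := by
      rw [h11]
      show L (Sum.inl i) (Sum.inl j) ≤ 0
      rw [hoffL _ _ (by simpa using hij)]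
      simpa using hnonneg _ _
    rw [hLr]
    simp only [Matrix.sub_apply]
    linarith
  -- row sums are zero
  · have hL1 : L.mulVec (fun _ => 1) = 0 := by
      ext i
      rw [hL, sub_mulVec]
      simp only [Pi.sub_apply, Pi.zero_apply, mulVec_diagonal, mul_one]
      simp only [mulVec, dotProduct, mul_one]
      exact sub_self _
    have hsplit : (fun _ : Fin p ⊕ Fin q => (1:ℝ)) = Sum.elim (fun _ => 1) (fun _ => 1) := by
      ext k; cases k <;> rfl
    rw [hsplit, hblocks, fromBlocks_mulVec] at hL1
    have h1 : L11.mulVec (fun _ => 1) + L12.mulVec (fun _ => 1) = 0 := by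
      have := congrFun hL1
      ext a
      have h := this (Sum.inl a)
      simpa [Function.comp_def] using h
    have h2 : L12ᵀ.mulVec (fun _ => 1) + L22.mulVec (fun _ => 1) = 0 := by
      ext a
      have h := congrFun hL1 (Sum.inr a)
      simpa [Function.comp_def] using h
    have hinvL : L22⁻¹ * L22 = 1 := nonsing_inv_mul L22 hUnitDet
    rw [hLr, sub_mulVec]
    have key : (L12 * L22⁻¹ * L12ᵀ).mulVec (fun _ => 1) = L11.mulVec (fun _ => 1) := by
      have e1 : L12ᵀ.mulVec (fun _ => 1) = -(L22.mulVec (fun _ => 1)) := by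
        have := h2; ext a
        have h := congrFun this a
        simp only [Pi.add_apply, Pi.zero_apply] at h
        simp only [Pi.neg_apply]
        linarith
      calc (L12 * L22⁻¹ * L12ᵀ).mulVec (fun _ => 1)
          = (L12 * L22⁻¹).mulVec (L12ᵀ.mulVec (fun _ => 1)) := by
            rw [mulVec_mulVec]
        _ = (L12 * L22⁻¹).mulVec (-(L22.mulVec (fun _ => 1))) := by rw [e1]
        _ = -(((L12 * L22⁻¹) * L22).mulVec (fun _ => 1)) := by
            rw [mulVec_neg, mulVec_mulVec]
        _ = -(L12.mulVec (fun _ => 1)) := by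
            rw [Matrix.mul_assoc, hinvL, Matrix.mul_one]
        _ = L11.mulVec (fun _ => 1) := by
            ext a
            have h := congrFun h1 a
            simp only [Pi.add_apply, Pi.zero_apply] at h
            simp only [Pi.neg_apply]
            linarith
    rw [key, sub_self]
end

section
/- Let L be the Laplacian of a weighted graph with no isolated node, let u be an eigenvector associated with the largest eigenvalue λ_1 of L, and assume all components ξ_1, ..., ξ_n of u are nonzero. Partition the nodes into V+ = {i : ξ_i > 0} and V− = {i : ξ_i < 0}. Then every node of V+ has at least one neighbor in V−, and every node of V− has at least one neighbor in V+. -/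
open Matrix BigOperators

/-- For a weighted graph with no isolated node, if `u` is an eigenvector for
the largest eigenvalue `λ₁` of the Laplacian with all components nonzero (and
`λ₁ > d_i` for all `i`), then every node with `u i > 0` has a neighbor with `u j < 0`,
and every node with `u i < 0` has a neighbor with `u j > 0`. -/
theorem largest_eigenvector_polarity
    (n : ℕ) (A : Matrix (Fin n) (Fin n) ℝ)
    (hsym : A.IsSymm) (hnonneg : ∀ i j, 0 ≤ A i j)
    (d : Fin n → ℝ) (hd : ∀ i, d i = ∑ j, A i j) (hdpos : ∀ i, 0 < d i)
    (L : Matrix (Fin n) (Fin n) ℝ) (hL : L = Matrix.diagonal d - A)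
    (lam1 : ℝ) (hlam1 : ∀ i, d i < lam1)
    (u : Fin n → ℝ) (heig : L.mulVec u = lam1 • u)
    (hnz : ∀ i, u i ≠ 0) :
    ∀ i : Fin n,
      (0 < u i → ∃ j, j ≠ i ∧ 0 < A i j ∧ u j < 0) ∧
      (u i < 0 → ∃ j, j ≠ i ∧ 0 < A i j ∧ 0 < u j) := by
  intro i
  have h := congrFun heig i
  rw [hL, Matrix.sub_mulVec] at h
  simp only [Pi.sub_apply, Matrix.mulVec_diagonal, Pi.smul_apply, smul_eq_mul] at h
  have hAu : (A.mulVec u) i = ∑ j, A i j * u j := rfl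
  rw [hAu] at h
  have key : ∑ j, A i j * u j = (d i - lam1) * u i := by linarith
  constructor
  · intro hui
    by_contra hcon
    push_neg at hcon
    have hsum : 0 ≤ ∑ j, A i j * u j := by
      apply Finset.sum_nonneg
      intro j _
      by_cases hj : j = i
      · subst hj; exact mul_nonneg (hnonneg j j) (le_of_lt hui)
      · rcases le_or_gt (A i j) 0 with hA | hA
        · have : A i j = 0 := le_antisymm hA (hnonneg i j)
          simp [this]
        · have := hcon j hj hA
          exact mul_nonneg (le_of_lt hA) this
    have : (d i - lam1) * u i < 0 :=
      mul_neg_of_neg_of_pos (by linarith [hlam1 i]) hui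
    linarith [key ▸ hsum]
  · intro hui
    by_contra hcon
    push_neg at hcon
    have hsum : ∑ j, A i j * u j ≤ 0 := by
      apply Finset.sum_nonpos
      intro j _
      by_cases hj : j = i
      · subst hj; exact mul_nonpos_of_nonneg_of_nonpos (hnonneg j j) (le_of_lt hui)
      · rcases le_or_gt (A i j) 0 with hA | hA
        · have : A i j = 0 := le_antisymm hA (hnonneg i j)
          simp [this]
        · have := hcon j hj hA
          exact mul_nonpos_of_nonneg_of_nonpos (le_of_lt hA) this
    have : 0 < (d i - lam1) * u i :=
      mul_pos_of_neg_of_neg (by linarith [hlam1 i]) hui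
    linarith [key ▸ hsum]
end

section
/- Let L be the Laplacian of a connected weighted graph, L† its pseudoinverse, and b_e the incidence vector of an edge e = (i,j) (entries +sqrt(a_{ij}) at i, -sqrt(a_{ij}) at j, zero elsewhere). Then the quantity ||ΔL†||_F^2 = (b_e^T L† L† b_e)/(b_e^T L† b_e) satisfies ||ΔL†||_F^2 ≤ κ(L) (L†_{ii} + L†_{jj}), where κ(L) is the effective condition number of L (largest eigenvalue divided by smallest nonzero eigenvalue). -/
open Matrix BigOperators

lemma pinv_unique {n : ℕ} (A B C : Matrix (Fin n) (Fin n) ℝ)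
    (hB1 : A * B * A = A) (hB2 : B * A * B = B)
    (hB3 : (A * B)ᵀ = A * B) (hB4 : (B * A)ᵀ = B * A)
    (hC1 : A * C * A = A) (hC2 : C * A * C = C)
    (hC3 : (A * C)ᵀ = A * C) (hC4 : (C * A)ᵀ = C * A) :
    B = C := by
  have hAB : A * B = A * C := by
    calc A * B = (A * B)ᵀ := hB3.symm
    _ = Bᵀ * Aᵀ := transpose_mul _ _
    _ = Bᵀ * (A * C * A)ᵀ := by rw [hC1]
    _ = Bᵀ * (Aᵀ * (A * C)ᵀ) := by rw [transpose_mul]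
    _ = (Bᵀ * Aᵀ) * (A * C)ᵀ := by rw [mul_assoc]
    _ = (A * B)ᵀ * (A * C) := by rw [← transpose_mul, hC3]
    _ = (A * B) * (A * C) := by rw [hB3]
    _ = (A * B * A) * C := (mul_assoc (A*B) A C).symm
    _ = A * C := by rw [hB1]
  have hBA : B * A = C * A := by
    calc B * A = (B * A)ᵀ := hB4.symm
    _ = Aᵀ * Bᵀ := transpose_mul _ _
    _ = (A * C * A)ᵀ * Bᵀ := by rw [hC1]
    _ = ((C * A)ᵀ * Aᵀ) * Bᵀ := by rw [mul_assoc A C A, transpose_mul]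
    _ = (C * A)ᵀ * (Aᵀ * Bᵀ) := by rw [mul_assoc]
    _ = (C * A) * (B * A)ᵀ := by rw [← transpose_mul, hC4]
    _ = (C * A) * (B * A) := by rw [hB4]
    _ = C * (A * B * A) := by rw [mul_assoc, ← mul_assoc A B A]
    _ = C * A := by rw [hB1]
  calc B = B * A * B := hB2.symm
  _ = C * A * B := by rw [hBA]
  _ = C * (A * C) := by rw [mul_assoc, hAB]
  _ = C := by rw [← mul_assoc, hC2]

lemma quad_form {n : ℕ} (U : Matrix (Fin n) (Fin n) ℝ) (c : Fin n → ℝ) (v : Fin n → ℝ) :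
    v ⬝ᵥ (U * Matrix.diagonal c * Uᵀ).mulVec v
      = ∑ k, c k * (Uᵀ.mulVec v k)^2 := by
  rw [mul_assoc, ← mulVec_mulVec, dotProduct_mulVec, ← mulVec_transpose]
  rw [← mulVec_mulVec]
  simp only [dotProduct, mulVec_diagonal]
  exact Finset.sum_congr rfl fun k _ => by ring

lemma sandwich_mul {n : ℕ} (U : Matrix (Fin n) (Fin n) ℝ) (hU : Uᵀ * U = 1)
    (c c' : Fin n → ℝ) :
    (U * Matrix.diagonal c * Uᵀ) * (U * Matrix.diagonal c' * Uᵀ)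
      = U * Matrix.diagonal (fun k => c k * c' k) * Uᵀ := by
  calc (U * Matrix.diagonal c * Uᵀ) * (U * Matrix.diagonal c' * Uᵀ)
      = U * (Matrix.diagonal c * ((Uᵀ * U) * (Matrix.diagonal c' * Uᵀ))) := by
        simp only [mul_assoc]
    _ = U * (Matrix.diagonal c * Matrix.diagonal c' * Uᵀ) := by
        rw [hU, one_mul, mul_assoc]
    _ = U * Matrix.diagonal (fun k => c k * c' k) * Uᵀ := by
        rw [Matrix.diagonal_mul_diagonal, mul_assoc]

lemma sandwich_transpose {n : ℕ} (U : Matrix (Fin n) (Fin n) ℝ) (c : Fin n → ℝ) :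
    (U * Matrix.diagonal c * Uᵀ)ᵀ = U * Matrix.diagonal c * Uᵀ := by
  simp [transpose_mul, Matrix.diagonal_transpose, mul_assoc]

/-- For the Laplacian `L` of a connected weighted graph with pseudoinverse
`L†` and edge incidence vector `b_e` of edge `e = (i,j)`, the quantity
`‖ΔL†‖_F² = (b_eᵀ L† L† b_e)/(b_eᵀ L† b_e)` is bounded by `κ(L) (L†_{ii} + L†_{jj})`,
where `κ(L)` is the effective condition number (largest eigenvalue over smallest
nonzero eigenvalue). -/
theorem delta_pseudoinverse_bound
    (n : ℕ) [NeZero n]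
    (L U : Matrix (Fin n) (Fin n) ℝ) (lam : Fin n → ℝ)
    (hU : Uᵀ * U = 1) (hU' : U * Uᵀ = 1)
    (hL : L = U * Matrix.diagonal lam * Uᵀ)
    (hlam0 : lam 0 = 0) (hlampos : ∀ j, j ≠ 0 → 0 < lam j)
    -- connectedness: the null space of L is spanned by the all-ones vector
    (hker : ∀ x : Fin n → ℝ, L.mulVec x = 0 → ∃ c : ℝ, x = fun _ => c)
    -- effective condition number κ = λ_max / λ_min over nonzero eigenvalues
    (lamMin lamMax : ℝ) (hMinpos : 0 < lamMin)
    (hMin : ∀ j, j ≠ 0 → lamMin ≤ lam j) (hMax : ∀ j, j ≠ 0 → lam j ≤ lamMax)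
    (Ld : Matrix (Fin n) (Fin n) ℝ)
    -- Moore–Penrose conditions
    (h1 : L * Ld * L = L) (h2 : Ld * L * Ld = Ld)
    (h3 : (L * Ld)ᵀ = L * Ld) (h4 : (Ld * L)ᵀ = Ld * L)
    (i j : Fin n) (hij : i ≠ j) (a : ℝ) (ha : 0 < a)
    (b : Fin n → ℝ)
    (hb : b = fun k => if k = i then Real.sqrt a
                       else if k = j then -Real.sqrt a else 0) :
    (b ⬝ᵥ Ld.mulVec (Ld.mulVec b)) / (b ⬝ᵥ Ld.mulVec b) ≤
      (lamMax / lamMin) * (Ld i i + Ld j j) := by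
  -- the pseudoinverse eigenvalues
  set d : Fin n → ℝ := fun k => if k = 0 then 0 else (lam k)⁻¹ with hd
  have hd0 : d 0 = 0 := by simp [hd]
  have hdk : ∀ k, k ≠ 0 → d k = (lam k)⁻¹ := fun k hk => by simp [hd, hk]
  -- eigenvalue products
  have hld : (fun k => lam k * d k) = fun k => if k = 0 then (0:ℝ) else 1 := by
    funext k
    by_cases hk : k = 0
    · simp [hk, hlam0]
    · simp [hdk k hk, hk, mul_inv_cancel₀ (hlampos k hk).ne']
  have hdl : (fun k => d k * lam k) = fun k => if k = 0 then (0:ℝ) else 1 := by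
    funext k
    by_cases hk : k = 0
    · simp [hk, hlam0]
    · simp [hdk k hk, hk, inv_mul_cancel₀ (hlampos k hk).ne']
  have hpl : (fun k => (if k = 0 then (0:ℝ) else 1) * lam k) = lam := by
    funext k; by_cases hk : k = 0 <;> simp [hk, hlam0]
  have hpd : (fun k => (if k = 0 then (0:ℝ) else 1) * d k) = d := by
    funext k; by_cases hk : k = 0 <;> simp [hk, hd0]
  -- identify Ld
  set M : Matrix (Fin n) (Fin n) ℝ := U * Matrix.diagonal d * Uᵀ with hM
  have hLM : L * M = U * Matrix.diagonal (fun k => if k = 0 then (0:ℝ) else 1) * Uᵀ := by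
    rw [hL, hM, sandwich_mul U hU, hld]
  have hML : M * L = U * Matrix.diagonal (fun k => if k = 0 then (0:ℝ) else 1) * Uᵀ := by
    rw [hL, hM, sandwich_mul U hU, hdl]
  have m1 : L * M * L = L := by
    rw [hLM, hL, sandwich_mul U hU, hpl]
  have m2 : M * L * M = M := by
    rw [hML, hM, sandwich_mul U hU, hpd]
  have m3 : (L * M)ᵀ = L * M := by rw [hLM]; exact sandwich_transpose U _
  have m4 : (M * L)ᵀ = M * L := by rw [hML]; exact sandwich_transpose U _
  have hLd : Ld = M := pinv_unique L Ld M h1 h2 h3 h4 m1 m2 m3 m4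
  -- the rotated vector
  set y : Fin n → ℝ := Uᵀ.mulVec b with hy
  -- column 0 of U is constant
  have hu0 : L.mulVec (fun k => U k 0) = 0 := by
    have he : (fun k => U k 0) = U.mulVec (Pi.single 0 1) := by
      funext k; rw [mulVec_single]; simp
    have hzero : (Matrix.diagonal lam).mulVec (Pi.single (0 : Fin n) (1:ℝ)) = 0 := by
      funext k
      rw [mulVec_diagonal]
      by_cases hk : k = 0
      · simp [hk, hlam0]
      · simp [Pi.single_apply, hk]
    rw [he, mulVec_mulVec, hL]
    rw [show U * Matrix.diagonal lam * Uᵀ * U = U * Matrix.diagonal lam by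
      rw [mul_assoc, hU, mul_one]]
    rw [← mulVec_mulVec, hzero, mulVec_zero]
  obtain ⟨c, hc⟩ := hker _ hu0
  have hUc : ∀ k, U k 0 = c := fun k => congrFun hc k
  -- sum of entries of b is 0
  have hsb : ∑ k, b k = 0 := by
    have hsplit : b = (fun k => if k = i then Real.sqrt a else 0)
        + (fun k => if k = j then -Real.sqrt a else 0) := by
      funext k
      by_cases hki : k = i
      · simp [hb, hki, hij]
      · by_cases hkj : k = j <;> simp [hb, hki, hkj, Ne.symm hij]
    rw [hsplit]
    simp [Finset.sum_add_distrib]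
  have hy0 : y 0 = 0 := by
    have : y 0 = ∑ k, U k 0 * b k := by
      simp [hy, mulVec, dotProduct, transpose_apply]
    rw [this]
    calc ∑ k, U k 0 * b k = ∑ k, c * b k := by
          exact Finset.sum_congr rfl fun k _ => by rw [hUc k]
    _ = c * ∑ k, b k := by rw [Finset.mul_sum]
    _ = 0 := by rw [hsb, mul_zero]
  -- norm of b
  have hbb : b ⬝ᵥ b = 2 * a := by
    have hsplit : (fun k => b k * b k) = (fun k => if k = i then a else 0)
        + (fun k => if k = j then a else 0) := by
      funext k
      by_cases hki : k = i
      · simp [hb, hki, hij, Real.mul_self_sqrt ha.le]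
      · by_cases hkj : k = j <;>
          simp [hb, hki, hkj, Ne.symm hij, Real.mul_self_sqrt ha.le]
    calc b ⬝ᵥ b = ∑ k, b k * b k := rfl
    _ = ∑ k, ((fun k => if k = i then a else 0) + (fun k => if k = j then a else 0)) k := by
        rw [hsplit]
    _ = 2 * a := by simp [Finset.sum_add_distrib]; ring
  -- norm of y
  have hyy : ∑ k, (y k)^2 = 2 * a := by
    have h1' : ∑ k, (y k)^2 = y ⬝ᵥ y := by
      simp [dotProduct, sq]
    have h2' : b ⬝ᵥ U.mulVec (Uᵀ.mulVec b) = y ⬝ᵥ y := by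
      rw [dotProduct_mulVec, ← mulVec_transpose]
    have h3' : U.mulVec (Uᵀ.mulVec b) = b := by
      rw [mulVec_mulVec, hU', one_mulVec]
    rw [h1', ← h2', h3', hbb]
  -- quadratic forms
  have hS1 : b ⬝ᵥ Ld.mulVec b = ∑ k, d k * (y k)^2 := by
    rw [hLd, hM]; exact quad_form U d b
  have hS2 : b ⬝ᵥ Ld.mulVec (Ld.mulVec b) = ∑ k, (d k * d k) * (y k)^2 := by
    rw [mulVec_mulVec, hLd, hM, sandwich_mul U hU]
    exact quad_form U _ b
  -- diagonal entries
  have hdiag : ∀ t : Fin n, Ld t t = ∑ k, d k * (U t k)^2 := by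
    intro t
    rw [hLd, hM, mul_apply]
    simp only [Matrix.mul_diagonal, transpose_apply]
    exact Finset.sum_congr rfl fun k _ => by ring
  -- row norms
  have hrow : ∀ t, ∑ k, (U t k)^2 = 1 := by
    intro t
    have := congrFun (congrFun hU' t) t
    simp only [mul_apply, transpose_apply, one_apply_eq] at this
    rw [← this]
    exact Finset.sum_congr rfl fun k _ => by ring
  -- column norm and c² bound
  have hcoln : ∑ k, (U k 0)^2 = 1 := by
    have := congrFun (congrFun hU 0) 0
    simp only [mul_apply, transpose_apply, one_apply_eq] at this
    rw [← this]
    exact Finset.sum_congr rfl fun k _ => by ring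
  have hc2 : c^2 + c^2 ≤ 1 := by
    have hsub : ({i, j} : Finset (Fin n)) ⊆ Finset.univ := Finset.subset_univ _
    have hle : ∑ k ∈ ({i, j} : Finset (Fin n)), (U k 0)^2 ≤ ∑ k, (U k 0)^2 :=
      Finset.sum_le_sum_of_subset_of_nonneg hsub (fun k _ _ => sq_nonneg _)
    rw [Finset.sum_pair hij, hUc i, hUc j, hcoln] at hle
    exact hle
  -- positivity of lamMax
  have hk0 : ∃ k : Fin n, k ≠ 0 := by
    by_cases hi : i = 0
    · exact ⟨j, fun hj0 => hij (hi.trans hj0.symm)⟩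
    · exact ⟨i, hi⟩
  obtain ⟨k0, hk0⟩ := hk0
  have hMaxpos : 0 < lamMax := lt_of_lt_of_le hMinpos ((hMin k0 hk0).trans (hMax k0 hk0))
  -- bounds on d
  have hdnn : ∀ k, 0 ≤ d k := by
    intro k
    by_cases hk : k = 0
    · simp [hk, hd0]
    · rw [hdk k hk]; exact (inv_pos.mpr (hlampos k hk)).le
  have hdle : ∀ k, d k ≤ lamMin⁻¹ := by
    intro k
    by_cases hk : k = 0
    · simp [hk, hd0]; positivity
    · rw [hdk k hk]
      exact inv_anti₀ hMinpos (hMin k hk)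
  have hdge : ∀ k, k ≠ 0 → lamMax⁻¹ ≤ d k := by
    intro k hk
    rw [hdk k hk]
    exact inv_anti₀ (hlampos k hk) (hMax k hk)
  -- S1 lower bound
  have hS1ge : lamMax⁻¹ * (2 * a) ≤ ∑ k, d k * (y k)^2 := by
    calc lamMax⁻¹ * (2 * a) = ∑ k, lamMax⁻¹ * (y k)^2 := by
          rw [← Finset.mul_sum, hyy]
    _ ≤ ∑ k, d k * (y k)^2 := by
        apply Finset.sum_le_sum
        intro k _
        by_cases hk : k = 0
        · rw [hk, hy0]; simp
        · exact mul_le_mul_of_nonneg_right (hdge k hk) (sq_nonneg _)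
  have hS1pos : 0 < b ⬝ᵥ Ld.mulVec b := by
    rw [hS1]
    exact lt_of_lt_of_le (by positivity) hS1ge
  -- main estimate for the ratio
  have hmain : (b ⬝ᵥ Ld.mulVec (Ld.mulVec b)) / (b ⬝ᵥ Ld.mulVec b) ≤ lamMin⁻¹ := by
    rw [div_le_iff₀ hS1pos, hS2, hS1, Finset.mul_sum]
    apply Finset.sum_le_sum
    intro k _
    calc (d k * d k) * (y k)^2 ≤ (lamMin⁻¹ * d k) * (y k)^2 :=
          mul_le_mul_of_nonneg_right
            (mul_le_mul_of_nonneg_right (hdle k) (hdnn k)) (sq_nonneg _)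
    _ = lamMin⁻¹ * (d k * (y k)^2) := by ring
  -- diagonal lower bound
  have hdiagge : ∀ t : Fin n, lamMax⁻¹ * (1 - c^2) ≤ Ld t t := by
    intro t
    rw [hdiag t]
    have hterm : ∑ k, (lamMax⁻¹ * (U t k)^2 - (if k = 0 then lamMax⁻¹ * (U t k)^2 else 0))
        ≤ ∑ k, d k * (U t k)^2 := by
      apply Finset.sum_le_sum
      intro k _
      by_cases hk : k = 0
      · simp [hk, hd0]
      · rw [if_neg hk, sub_zero]
        exact mul_le_mul_of_nonneg_right (hdge k hk) (sq_nonneg _)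
    have hsum : ∑ k, (lamMax⁻¹ * (U t k)^2 - (if k = 0 then lamMax⁻¹ * (U t k)^2 else 0))
        = lamMax⁻¹ * (1 - c^2) := by
      rw [Finset.sum_sub_distrib, ← Finset.mul_sum, hrow t,
        Finset.sum_ite_eq' Finset.univ (0 : Fin n) (fun k => lamMax⁻¹ * (U t k)^2)]
      simp [hUc t]
      ring
    linarith
  have hsumdiag : lamMax⁻¹ ≤ Ld i i + Ld j j := by
    have hi' := hdiagge i
    have hj' := hdiagge j
    nlinarith [inv_pos.mpr hMaxpos, hc2]
  -- conclusion
  calc (b ⬝ᵥ Ld.mulVec (Ld.mulVec b)) / (b ⬝ᵥ Ld.mulVec b) ≤ lamMin⁻¹ := hmain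
  _ = (lamMax / lamMin) * lamMax⁻¹ := by field_simp
  _ ≤ (lamMax / lamMin) * (Ld i i + Ld j j) :=
      mul_le_mul_of_nonneg_left hsumdiag (by positivity)
end
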